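/- Fix α, β ∈ (0,1) and p > 1, and assume ℓ ≥ 1. Assume λ̃_{i*} = max_i λ̃_i > 0 for some index i*, ‖Ẽ(I,u,u)‖ ≤ ε̃ for every unit u ∈ ℝ^k, ‖Ẽ(I,u,u)‖ ≤ ε̃/p for every unit u with ⟨v_{i*},u⟩² ≥ 1 − (3ε̃/λ̃_{i*})², and ‖Ẽ‖_F ≤ ε̃_F. Suppose ε̃ ≤ min{α/(5√k + 7), (1−β)/7}·λ̃_{i*} and ε̃_F ≤ √ℓ·((1−β)/(2β))·λ̃_{i*}. Then every unit vector θ ∈ ℝ^k satisfying ⟨v_{i*},θ⟩² ≥ 1 − (3ε̃/(p·λ̃_{i*}))² and T̃(θ,θ,θ) ≥ λ̃_{i*} − (27·(ε̃/(p·λ̃_{i*}))² + 2)·ε̃/p also satisfies the stopping condition |T̃(θ,θ,θ)| ≥ max{(β/√ℓ)·‖T̃‖_F, ‖T̃(I,I,θ)‖_F/(1+α)}. -/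

import Mathlib

/-!
Since `ε̃ ≤ (1-β) λ̃_{i*} / 7`, the hypothesis on `T̃(θ,θ,θ)` gives
`T̃(θ,θ,θ) ≥ λ̃_{i*} - (125/49) ε̃ ≥ (1+β)/2 · λ̃_{i*}`.
By orthonormality the signal part `∑ λ̃_i v_i^{⊗3}` has Frobenius norm `‖λ̃‖₂ ≤ √ℓ λ̃_{i*}`, and
its contraction with `θ` has Frobenius norm `(∑ λ̃_i² ⟨v_i,θ⟩²)^{1/2} ≤ λ̃_{i*}`.
By polarization each column `Ẽ(I,e_b,θ)` of `Ẽ(I,I,θ)` equals `(Ẽ(I,u₊,u₊) - Ẽ(I,u₋,u₋))/4`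
with `u_± = e_b ± θ`, so its norm is at most `ε̃ (‖u₊‖² + ‖u₋‖²)/4 = ε̃`, and
`‖Ẽ(I,I,θ)‖_F ≤ √k ε̃`. The triangle inequality and the smallness of `ε̃` and `ε̃_F` then give
both halves of the stopping condition.
-/

open scoped BigOperators

noncomputable section

/-- Euclidean dot product on `ℝ^k`. -/
def dotp {k : ℕ} (u v : Fin k → ℝ) : ℝ := ∑ i, u i * v i

/-- Euclidean norm on `ℝ^k`. -/
def enorm' {k : ℕ} (u : Fin k → ℝ) : ℝ := Real.sqrt (∑ i, (u i) ^ 2)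

/-- Third-order tensors on `ℝ^k`, as `k × k × k` arrays. -/
abbrev Tensor3 (k : ℕ) := Fin k → Fin k → Fin k → ℝ

/-- Symmetry of a third-order tensor (invariance under index permutations). -/
def Symm3 {k : ℕ} (A : Tensor3 k) : Prop :=
  ∀ a b c, A a b c = A b a c ∧ A a b c = A a c b

/-- Evaluation `A(x,y,z)` of a third-order tensor. -/
def tapp {k : ℕ} (A : Tensor3 k) (x y z : Fin k → ℝ) : ℝ :=
  ∑ a, ∑ b, ∑ c, A a b c * x a * y b * z c

/-- `A(I,u,u)` as a vector. -/
def tvec {k : ℕ} (A : Tensor3 k) (u : Fin k → ℝ) : Fin k → ℝ :=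
  fun a => ∑ b, ∑ c, A a b c * u b * u c

/-- `T̃(x,y,z) = ∑ i, λ̃ i ⟨v i, x⟩⟨v i, y⟩⟨v i, z⟩ + Ẽ(x,y,z)`. -/
def Tapp {k : ℕ} (lam : Fin k → ℝ) (v : Fin k → Fin k → ℝ) (E : Tensor3 k)
    (x y z : Fin k → ℝ) : ℝ :=
  (∑ i, lam i * (dotp (v i) x * (dotp (v i) y * dotp (v i) z))) + tapp E x y z

/-- `T̃(I,u,u)` as a vector. -/
def Tvec {k : ℕ} (lam : Fin k → ℝ) (v : Fin k → Fin k → ℝ) (E : Tensor3 k)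
    (u : Fin k → ℝ) : Fin k → ℝ :=
  (∑ i, (lam i * (dotp (v i) u) ^ 2) • v i) + tvec E u

/-- The full array of the tensor `T̃ = ∑ i, λ̃ i • (v i)^⊗3 + Ẽ`. -/
def Tarr {k : ℕ} (lam : Fin k → ℝ) (v : Fin k → Fin k → ℝ) (E : Tensor3 k) :
    Tensor3 k :=
  fun a b c => (∑ i, lam i * (v i a * (v i b * v i c))) + E a b c

/-- Frobenius norm of a matrix. -/
def frobM {k : ℕ} (M : Matrix (Fin k) (Fin k) ℝ) : ℝ :=
  Real.sqrt (∑ a, ∑ b, (M a b) ^ 2)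

/-- `A(I,I,u)` as a matrix. -/
def tmat {k : ℕ} (A : Tensor3 k) (u : Fin k → ℝ) : Matrix (Fin k) (Fin k) ℝ :=
  Matrix.of fun a b => ∑ c, A a b c * u c

/-- Frobenius norm of a third-order tensor: `(∑ i ‖A(I,I,e_i)‖_F²)^{1/2}`. -/
def frobT {k : ℕ} (A : Tensor3 k) : ℝ :=
  Real.sqrt (∑ c, (frobM (tmat A (Pi.single c 1))) ^ 2)

/-- `ℓ`, the number of strictly positive `λ̃ i`. -/
def ells {k : ℕ} (lam : Fin k → ℝ) : ℕ :=
  (Finset.univ.filter fun i : Fin k => 0 < lam i).card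

/-- `λ̃_avg = ((1/ℓ) ∑ i, λ̃ i²)^{1/2}`. -/
def lavg {k : ℕ} (lam : Fin k → ℝ) : ℝ :=
  Real.sqrt ((1 / (ells lam : ℝ)) * ∑ i, (lam i) ^ 2)


section Orthonormal

variable {ι ι' κ : Type*} [Fintype ι] [Fintype ι'] [DecidableEq κ]

def IsOrthonormalFamily (g : κ → ι → ℝ) : Prop :=
  ∀ i j, ∑ x, g i x * g j x = if i = j then 1 else 0

theorem IsOrthonormalFamily.sum_sq_sum_mul [Fintype κ] {g : κ → ι → ℝ}
    (hg : IsOrthonormalFamily g) (w : κ → ℝ) :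
    ∑ x, (∑ i, w i * g i x) ^ 2 = ∑ i, w i ^ 2 := by
  calc ∑ x, (∑ i, w i * g i x) ^ 2
      = ∑ i, ∑ j, w i * w j * ∑ x, g i x * g j x := by
        simp_rw [sq, Finset.sum_mul_sum, Finset.mul_sum]
        rw [Finset.sum_comm]
        refine Finset.sum_congr rfl fun i _ => ?_
        rw [Finset.sum_comm]
        exact Finset.sum_congr rfl fun j _ => Finset.sum_congr rfl fun x _ => by ring
    _ = ∑ i, w i ^ 2 := by simp [hg _ _, sq]

theorem IsOrthonormalFamily.mul {g : κ → ι → ℝ} {h : κ → ι' → ℝ}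
    (hg : IsOrthonormalFamily g) (hh : IsOrthonormalFamily h) :
    IsOrthonormalFamily fun i (x : ι × ι') => g i x.1 * h i x.2 := by
  intro i j
  calc ∑ x : ι × ι', g i x.1 * h i x.2 * (g j x.1 * h j x.2)
      = (∑ x, g i x * g j x) * ∑ y, h i y * h j y := by
        rw [Fintype.sum_prod_type, Finset.sum_mul_sum]
        exact Finset.sum_congr rfl fun x _ => Finset.sum_congr rfl fun y _ => by ring
    _ = if i = j then 1 else 0 := by rw [hg, hh]; split_ifs <;> simp

theorem IsOrthonormalFamily.transpose [DecidableEq ι] {g : ι → ι → ℝ}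
    (hg : IsOrthonormalFamily g) : IsOrthonormalFamily fun x i => g i x := by
  have hmul : Matrix.of g * (Matrix.of g).transpose = 1 := by
    ext i j
    simpa [Matrix.mul_apply, Matrix.one_apply] using hg i j
  have hmul' := mul_eq_one_comm.mp hmul
  intro x y
  simpa [Matrix.mul_apply, Matrix.one_apply] using congrFun (congrFun hmul' x) y

end Orthonormal

theorem sqrt_sum_sq_eq_norm {ι : Type*} [Fintype ι] (f : ι → ℝ) :
    √(∑ x, f x ^ 2) = ‖(WithLp.toLp 2 f : EuclideanSpace ℝ ι)‖ := by
  simp [EuclideanSpace.norm_eq]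

theorem sqrt_sum_sq_add_le {ι : Type*} [Fintype ι] (f g : ι → ℝ) :
    √(∑ x, (f x + g x) ^ 2) ≤ √(∑ x, f x ^ 2) + √(∑ x, g x ^ 2) := by
  simp only [sqrt_sum_sq_eq_norm]
  exact norm_add_le (WithLp.toLp 2 f : EuclideanSpace ℝ ι) (WithLp.toLp 2 g)

section Tensor

variable {k : ℕ}

theorem enorm'_eq_norm (u : Fin k → ℝ) :
    enorm' u = ‖(WithLp.toLp 2 u : EuclideanSpace ℝ (Fin k))‖ :=
  sqrt_sum_sq_eq_norm u

theorem enorm'_sq (u : Fin k → ℝ) : enorm' u ^ 2 = ∑ i, u i ^ 2 :=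
  Real.sq_sqrt (Finset.sum_nonneg fun _ _ => sq_nonneg _)

theorem frobM_eq_sqrt (M : Matrix (Fin k) (Fin k) ℝ) :
    frobM M = √(∑ p : Fin k × Fin k, M p.1 p.2 ^ 2) := by
  rw [frobM, Fintype.sum_prod_type]

theorem frobT_eq_sqrt (A : Tensor3 k) :
    frobT A = √(∑ p : Fin k × Fin k × Fin k, A p.1 p.2.1 p.2.2 ^ 2) := by
  have hslice : ∀ c, tmat A (Pi.single c 1) = Matrix.of fun a b => A a b c := by
    intro c; ext a b; simp [tmat, Pi.single_apply]
  simp_rw [frobT, hslice, frobM, Matrix.of_apply]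
  congr 1
  simp_rw [Real.sq_sqrt (Finset.sum_nonneg fun _ _ => Finset.sum_nonneg fun _ _ => sq_nonneg _),
    Fintype.sum_prod_type]
  rw [Finset.sum_comm]
  exact Finset.sum_congr rfl fun a _ => Finset.sum_comm

theorem frobM_add_le (M N : Matrix (Fin k) (Fin k) ℝ) : frobM (M + N) ≤ frobM M + frobM N := by
  simpa only [frobM_eq_sqrt, Matrix.add_apply] using
    sqrt_sum_sq_add_le (fun p : Fin k × Fin k => M p.1 p.2) (fun p => N p.1 p.2)

theorem frobT_add_le (A B : Tensor3 k) : frobT (A + B) ≤ frobT A + frobT B := by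
  simpa only [frobT_eq_sqrt, Pi.add_apply] using
    sqrt_sum_sq_add_le (fun p : Fin k × Fin k × Fin k => A p.1 p.2.1 p.2.2)
      (fun p => B p.1 p.2.1 p.2.2)

end Tensor

section ErrorTensor

variable {k : ℕ} {E : Tensor3 k} {ε : ℝ}

theorem enorm'_smul (c : ℝ) (u : Fin k → ℝ) : enorm' (c • u) = |c| * enorm' u := by
  rw [enorm'_eq_norm, enorm'_eq_norm, WithLp.toLp_smul, norm_smul, Real.norm_eq_abs]

theorem enorm'_single (b : Fin k) : enorm' (Pi.single b 1 : Fin k → ℝ) = 1 := by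
  simp [enorm', Pi.single_apply]

theorem tvec_smul (E : Tensor3 k) (c : ℝ) (u : Fin k → ℝ) :
    tvec E (c • u) = c ^ 2 • tvec E u := by
  ext a
  simp only [tvec, Pi.smul_apply, smul_eq_mul, Finset.mul_sum]
  exact Finset.sum_congr rfl fun b _ => Finset.sum_congr rfl fun c _ => by ring

theorem enorm'_tvec_le (hE : ∀ u, enorm' u = 1 → enorm' (tvec E u) ≤ ε) (u : Fin k → ℝ) :
    enorm' (tvec E u) ≤ ε * enorm' u ^ 2 := by
  rcases eq_or_ne u 0 with rfl | hu
  · have h0 : tvec E 0 = 0 := by simpa using tvec_smul E 0 0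
    simp [h0, enorm']
  have hr : 0 < enorm' u := by
    rw [enorm'_eq_norm, norm_pos_iff]
    exact fun h => hu (by simpa using congrArg WithLp.ofLp h)
  set r := enorm' u
  have hunit : enorm' (r⁻¹ • u) = 1 := by
    rw [enorm'_smul, abs_inv, abs_of_pos hr, inv_mul_cancel₀ hr.ne']
  calc enorm' (tvec E u) = enorm' (tvec E (r • r⁻¹ • u)) := by
        rw [smul_smul, mul_inv_cancel₀ hr.ne', one_smul]
    _ = r ^ 2 * enorm' (tvec E (r⁻¹ • u)) := by
        rw [tvec_smul, enorm'_smul, abs_of_nonneg (sq_nonneg r)]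
    _ ≤ ε * r ^ 2 := by nlinarith [hE _ hunit]

theorem tvec_add_sub_tvec_sub (hE : Symm3 E) (x y : Fin k → ℝ) :
    tvec E (x + y) - tvec E (x - y) = (4 : ℝ) • fun a => ∑ b, ∑ c, E a b c * x b * y c := by
  ext a
  have hswap : ∑ b, ∑ c, E a b c * y b * x c = ∑ b, ∑ c, E a b c * x b * y c := by
    rw [Finset.sum_comm]
    exact Finset.sum_congr rfl fun b _ => Finset.sum_congr rfl fun c _ => by
      rw [(hE a c b).2]; ring
  calc tvec E (x + y) a - tvec E (x - y) a
      = 2 * ∑ b, ∑ c, E a b c * x b * y c + 2 * ∑ b, ∑ c, E a b c * y b * x c := by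
        simp only [tvec, Pi.add_apply, Pi.sub_apply, Finset.mul_sum, ← Finset.sum_sub_distrib,
          ← Finset.sum_add_distrib]
        exact Finset.sum_congr rfl fun b _ => Finset.sum_congr rfl fun c _ => by ring
    _ = _ := by rw [hswap, Pi.smul_apply, smul_eq_mul]; ring

theorem tmat_col_eq (hE : Symm3 E) (θ : Fin k → ℝ) (b : Fin k) :
    (fun a => tmat E θ a b)
      = (4 : ℝ)⁻¹ • (tvec E (Pi.single b 1 + θ) - tvec E (Pi.single b 1 - θ)) := by
  rw [tvec_add_sub_tvec_sub hE, smul_smul, inv_mul_cancel₀ four_ne_zero, one_smul]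
  ext a
  simp [tmat, Pi.single_apply]

theorem enorm'_tmat_col_le (hE1 : ∀ u, enorm' u = 1 → enorm' (tvec E u) ≤ ε) (hE : Symm3 E)
    (θ : Fin k → ℝ) (b : Fin k) :
    enorm' (fun a => tmat E θ a b) ≤ ε * (1 + enorm' θ ^ 2) / 2 := by
  rw [tmat_col_eq hE, enorm'_smul, abs_of_pos (by norm_num)]
  set e : Fin k → ℝ := Pi.single b 1
  have hpar : enorm' (e + θ) ^ 2 + enorm' (e - θ) ^ 2 = 2 * (enorm' e ^ 2 + enorm' θ ^ 2) := by
    simp only [enorm'_eq_norm, WithLp.toLp_add, WithLp.toLp_sub]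
    exact parallelogram_law_with_norm ℝ (WithLp.toLp 2 e : EuclideanSpace ℝ (Fin k))
      (WithLp.toLp 2 θ)
  rw [enorm'_single, one_pow] at hpar
  have hsub := norm_sub_le (WithLp.toLp 2 (tvec E (e + θ)) : EuclideanSpace ℝ (Fin k))
    (WithLp.toLp 2 (tvec E (e - θ)))
  rw [← WithLp.toLp_sub, ← enorm'_eq_norm, ← enorm'_eq_norm, ← enorm'_eq_norm] at hsub
  calc 4⁻¹ * enorm' (tvec E (e + θ) - tvec E (e - θ))
      ≤ 4⁻¹ * (ε * enorm' (e + θ) ^ 2 + ε * enorm' (e - θ) ^ 2) := by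
        gcongr
        linarith [enorm'_tvec_le hE1 (e + θ), enorm'_tvec_le hE1 (e - θ)]
    _ = ε * (1 + enorm' θ ^ 2) / 2 := by rw [← mul_add, hpar]; ring

theorem frobM_tmat_le (hE1 : ∀ u, enorm' u = 1 → enorm' (tvec E u) ≤ ε) (hE : Symm3 E)
    (hε : 0 ≤ ε) {θ : Fin k → ℝ} (hθ : enorm' θ = 1) : frobM (tmat E θ) ≤ √k * ε := by
  have hcol : ∀ b, enorm' (fun a => tmat E θ a b) ^ 2 ≤ ε ^ 2 := fun b =>
    pow_le_pow_left₀ (Real.sqrt_nonneg _)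
      ((enorm'_tmat_col_le hE1 hE θ b).trans_eq (by rw [hθ]; ring)) 2
  calc frobM (tmat E θ) = √(∑ b, enorm' (fun a => tmat E θ a b) ^ 2) := by
        simp only [frobM, enorm', Real.sq_sqrt (Finset.sum_nonneg fun _ _ => sq_nonneg _)]
        rw [Finset.sum_comm]
    _ ≤ √(k * ε ^ 2) :=
        Real.sqrt_le_sqrt ((Finset.sum_le_sum fun b _ => hcol b).trans_eq (by simp))
    _ = √k * ε := by rw [Real.sqrt_mul (Nat.cast_nonneg k), Real.sqrt_sq hε]

end ErrorTensor

section Signal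

variable {k : ℕ} {lam : Fin k → ℝ} {v : Fin k → Fin k → ℝ} {istar : Fin k}

theorem IsOrthonormalFamily.sum_sq_dotp (hv : IsOrthonormalFamily v) (θ : Fin k → ℝ) :
    ∑ i, dotp (v i) θ ^ 2 = enorm' θ ^ 2 := by
  simpa [dotp, enorm'_sq, mul_comm] using hv.transpose.sum_sq_sum_mul θ

theorem Tarr_eq_add (lam : Fin k → ℝ) (v : Fin k → Fin k → ℝ) (E : Tensor3 k) :
    Tarr lam v E = Tarr lam v 0 + E := by
  ext a b c
  simp [Tarr]

theorem tmat_add (A B : Tensor3 k) (θ : Fin k → ℝ) : tmat (A + B) θ = tmat A θ + tmat B θ := by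
  ext a b
  simp [tmat, add_mul, Finset.sum_add_distrib]

theorem tmat_Tarr_zero (lam : Fin k → ℝ) (v : Fin k → Fin k → ℝ) (θ : Fin k → ℝ) :
    tmat (Tarr lam v 0) θ = Matrix.of fun a b => ∑ i, (lam i * dotp (v i) θ) * (v i a * v i b) := by
  ext a b
  simp only [tmat, Tarr, Matrix.of_apply, Pi.zero_apply, add_zero, Finset.sum_mul, dotp,
    Finset.mul_sum]
  rw [Finset.sum_comm]
  exact Finset.sum_congr rfl fun i _ => Finset.sum_congr rfl fun c _ => by ring

theorem IsOrthonormalFamily.frobM_tmat_Tarr_zero (hv : IsOrthonormalFamily v)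
    (lam : Fin k → ℝ) (θ : Fin k → ℝ) :
    frobM (tmat (Tarr lam v 0) θ) = √(∑ i, (lam i * dotp (v i) θ) ^ 2) := by
  rw [frobM_eq_sqrt, tmat_Tarr_zero]
  exact congrArg _ ((hv.mul hv).sum_sq_sum_mul _)

theorem IsOrthonormalFamily.frobT_Tarr_zero (hv : IsOrthonormalFamily v) (lam : Fin k → ℝ) :
    frobT (Tarr lam v 0) = √(∑ i, lam i ^ 2) := by
  rw [frobT_eq_sqrt]
  simp only [Tarr, Pi.zero_apply, add_zero]
  exact congrArg _ ((hv.mul (hv.mul hv)).sum_sq_sum_mul lam)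

theorem ells_pos {i : Fin k} (h : 0 < lam i) : 0 < ells lam :=
  Finset.card_pos.mpr ⟨i, by simp [h]⟩

theorem sum_sq_le_ells_mul_sq (hlam : ∀ i, 0 ≤ lam i) (histar : ∀ i, lam i ≤ lam istar) :
    ∑ i, lam i ^ 2 ≤ ells lam * lam istar ^ 2 := by
  rw [← Finset.sum_filter_of_ne (p := fun i => 0 < lam i) fun i _ h =>
    (hlam i).lt_of_ne (Ne.symm (pow_ne_zero_iff two_ne_zero |>.mp h))]
  refine (Finset.sum_le_card_nsmul _ _ _ fun i _ => ?_).trans_eq (nsmul_eq_mul _ _)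
  exact pow_le_pow_left₀ (hlam i) (histar i) 2

theorem IsOrthonormalFamily.frobT_Tarr_le (hv : IsOrthonormalFamily v)
    (hlam : ∀ i, 0 ≤ lam i) (histar : ∀ i, lam i ≤ lam istar) (E : Tensor3 k) :
    frobT (Tarr lam v E) ≤ √(ells lam) * lam istar + frobT E := by
  rw [Tarr_eq_add]
  refine (frobT_add_le _ _).trans (add_le_add_left ?_ _)
  rw [hv.frobT_Tarr_zero, ← Real.sqrt_sq (hlam istar), ← Real.sqrt_mul (Nat.cast_nonneg _)]
  exact Real.sqrt_le_sqrt (sum_sq_le_ells_mul_sq hlam histar)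

theorem IsOrthonormalFamily.frobM_tmat_Tarr_le (hv : IsOrthonormalFamily v)
    (hlam : ∀ i, 0 ≤ lam i) (histar : ∀ i, lam i ≤ lam istar)
    {E : Tensor3 k} {ε : ℝ} (hE1 : ∀ u, enorm' u = 1 → enorm' (tvec E u) ≤ ε) (hE : Symm3 E)
    (hε : 0 ≤ ε) {θ : Fin k → ℝ} (hθ : enorm' θ = 1) :
    frobM (tmat (Tarr lam v E) θ) ≤ lam istar + √k * ε := by
  rw [Tarr_eq_add, tmat_add]
  refine (frobM_add_le _ _).trans (add_le_add ?_ (frobM_tmat_le hE1 hE hε hθ))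
  rw [hv.frobM_tmat_Tarr_zero, ← Real.sqrt_sq (hlam istar)]
  refine Real.sqrt_le_sqrt ?_
  calc ∑ i, (lam i * dotp (v i) θ) ^ 2 ≤ ∑ i, lam istar ^ 2 * dotp (v i) θ ^ 2 :=
        Finset.sum_le_sum fun i _ => by
          rw [mul_pow]; gcongr; exacts [hlam i, histar i]
    _ = lam istar ^ 2 := by rw [← Finset.mul_sum, hv.sum_sq_dotp, hθ, one_pow, mul_one]

end Signal

theorem error_term_le {ε p L : ℝ} (hε : 0 ≤ ε) (hp : 1 < p) (hL : 0 < L) (h7 : 7 * ε ≤ L) :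
    (27 * (ε / (p * L)) ^ 2 + 2) * (ε / p) ≤ 125 / 49 * ε := by
  have hp0 : 0 < p := one_pos.trans hp
  have hq : ε / (p * L) ≤ 1 / 7 := by
    rw [div_le_iff₀ (by positivity)]; nlinarith
  have hεp : ε / p ≤ ε := div_le_self hε hp.le
  calc (27 * (ε / (p * L)) ^ 2 + 2) * (ε / p) ≤ (27 * (1 / 7) ^ 2 + 2) * ε := by
        gcongr
    _ = 125 / 49 * ε := by norm_num

theorem stmt19_general {k : ℕ}
    (lam : Fin k → ℝ) (hlam : ∀ i, 0 ≤ lam i)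
    (v : Fin k → Fin k → ℝ)
    (horth : ∀ i j, dotp (v i) (v j) = if i = j then 1 else 0)
    (E : Tensor3 k) (hE : Symm3 E)
    (α β p : ℝ) (hα : α ∈ Set.Ioo (0 : ℝ) 1) (hβ : β ∈ Set.Ioo (0 : ℝ) 1)
    (hp : 1 < p)
    (istar : Fin k) (histar : ∀ i, lam i ≤ lam istar) (hpos : 0 < lam istar)
    (εt εtF : ℝ)
    (hE1 : ∀ u : Fin k → ℝ, enorm' u = 1 → enorm' (tvec E u) ≤ εt)
    (hEF : frobT E ≤ εtF)
    (hεt : εt ≤ min (α / (5 * Real.sqrt k + 7)) ((1 - β) / 7) * lam istar)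
    (hεF : εtF ≤ Real.sqrt (ells lam) * ((1 - β) / (2 * β)) * lam istar) :
    ∀ θ : Fin k → ℝ, enorm' θ = 1 →
      (dotp (v istar) θ) ^ 2 ≥ 1 - (3 * εt / (p * lam istar)) ^ 2 →
      tapp (Tarr lam v E) θ θ θ
          ≥ lam istar - (27 * (εt / (p * lam istar)) ^ 2 + 2) * (εt / p) →
      |tapp (Tarr lam v E) θ θ θ|
        ≥ max ((β / Real.sqrt (ells lam)) * frobT (Tarr lam v E))
            (frobM (tmat (Tarr lam v E) θ) / (1 + α)) := by
  intro θ hθ _ hT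
  obtain ⟨hα0, hα1⟩ := hα
  obtain ⟨hβ0, hβ1⟩ := hβ
  have hv : IsOrthonormalFamily v := horth
  set L := lam istar
  set T := tapp (Tarr lam v E) θ θ θ
  have hε : 0 ≤ εt := (Real.sqrt_nonneg _).trans (hE1 _ (enorm'_single istar))
  have hεβ : 7 * εt ≤ (1 - β) * L := by
    have := hεt.trans (mul_le_mul_of_nonneg_right (min_le_right _ _) hpos.le)
    linarith
  have hεα : (5 * √k + 7) * εt ≤ α * L := by
    have := hεt.trans (mul_le_mul_of_nonneg_right (min_le_left _ _) hpos.le)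
    rwa [div_mul_eq_mul_div, le_div_iff₀ (by positivity), mul_comm] at this
  have hTL : L - 125 / 49 * εt ≤ T :=
    le_trans (by linarith [error_term_le hε hp hpos (by nlinarith)]) hT
  have hℓ : 0 < √(ells lam : ℝ) := Real.sqrt_pos.mpr (by exact_mod_cast ells_pos hpos)
  rw [ge_iff_le, abs_of_pos (by nlinarith), max_le_iff]
  constructor
  · calc β / √(ells lam) * frobT (Tarr lam v E)
        ≤ β / √(ells lam) * (√(ells lam) * L + √(ells lam) * ((1 - β) / (2 * β)) * L) := by
          gcongr
          exact (hv.frobT_Tarr_le hlam histar E).trans (by linarith)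
      _ = (1 + β) / 2 * L := by field_simp; ring
      _ ≤ T := by nlinarith
  · rw [div_le_iff₀ (by linarith)]
    linarith [hv.frobM_tmat_Tarr_le hlam histar hE1 hE hε hθ,
      mul_le_mul_of_nonneg_left hTL (by linarith : 0 ≤ 1 + α),
      mul_le_mul_of_nonneg_right hα1.le hε, mul_nonneg (Real.sqrt_nonneg k) hε]

/-- **The stopping condition is satisfied near the top eigenvector.**
Fix `α, β ∈ (0,1)`, `p > 1`, and suppose `λ̃_{i*} = max_i λ̃_i > 0`,
`ε̃ ≤ min{α/(5√k+7), (1−β)/7} λ̃_{i*}` and `ε̃_F ≤ √ℓ((1−β)/(2β)) λ̃_{i*}`.  Then every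
unit vector `θ` with `⟨v_{i*},θ⟩² ≥ 1 − (3ε̃/(pλ̃_{i*}))²` and
`T̃(θ,θ,θ) ≥ λ̃_{i*} − (27(ε̃/(pλ̃_{i*}))² + 2)ε̃/p` satisfies the stopping condition
`|T̃(θ,θ,θ)| ≥ max{(β/√ℓ)‖T̃‖_F, ‖T̃(I,I,θ)‖_F/(1+α)}`. -/
theorem stmt19 {k : ℕ}
    (lam : Fin k → ℝ) (hlam : ∀ i, 0 ≤ lam i)
    (v : Fin k → Fin k → ℝ)
    (horth : ∀ i j, dotp (v i) (v j) = if i = j then 1 else 0)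
    (E : Tensor3 k) (hE : Symm3 E)
    (α β p : ℝ) (hα : α ∈ Set.Ioo (0 : ℝ) 1) (hβ : β ∈ Set.Ioo (0 : ℝ) 1)
    (hp : 1 < p)
    (hl : 1 ≤ ells lam)
    (istar : Fin k) (histar : ∀ i, lam i ≤ lam istar) (hpos : 0 < lam istar)
    (εt εtF : ℝ)
    (hE1 : ∀ u : Fin k → ℝ, enorm' u = 1 → enorm' (tvec E u) ≤ εt)
    (hE2 : ∀ u : Fin k → ℝ, enorm' u = 1 →
      (dotp (v istar) u) ^ 2 ≥ 1 - (3 * εt / lam istar) ^ 2 →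
      enorm' (tvec E u) ≤ εt / p)
    (hEF : frobT E ≤ εtF)
    (hεt : εt ≤ min (α / (5 * Real.sqrt k + 7)) ((1 - β) / 7) * lam istar)
    (hεF : εtF ≤ Real.sqrt (ells lam) * ((1 - β) / (2 * β)) * lam istar) :
    ∀ θ : Fin k → ℝ, enorm' θ = 1 →
      (dotp (v istar) θ) ^ 2 ≥ 1 - (3 * εt / (p * lam istar)) ^ 2 →
      tapp (Tarr lam v E) θ θ θ
          ≥ lam istar - (27 * (εt / (p * lam istar)) ^ 2 + 2) * (εt / p) →
      |tapp (Tarr lam v E) θ θ θ|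
        ≥ max ((β / Real.sqrt (ells lam)) * frobT (Tarr lam v E))
            (frobM (tmat (Tarr lam v E) θ) / (1 + α)) :=
  stmt19_general lam hlam v horth E hE α β p hα hβ hp istar histar hpos εt εtF hE1 hEF hεt hεF

end
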